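/- arXiv:1202.1237 — 3 statements merged into one kernel-verified Lean document; each statement's English description precedes it below -/
import Mathlib

section
/- For every nonnegative integer n and nonzero x, the Legendre polynomial satisfies P_n(x) = x^n \sum_{k=0}^{\lfloor n/2 \rfloor} \binom{n}{2k} \binom{-1/2}{k} (1/x^2 - 1)^k. -/
open Polynomial Finset

/-- The Legendre polynomials over `ℚ`, defined by the three-term recurrence
`P₀ = 1`, `P₁ = X`, `(n+2)·P_{n+2} = (2n+3)·X·P_{n+1} - (n+1)·P_n`. -/
noncomputable def legendreP : ℕ → Polynomial ℚ
  | 0 => 1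
  | 1 => X
  | n + 2 => C ((n + 2 : ℚ))⁻¹ *
      (C (2 * (n : ℚ) + 3) * X * legendreP (n + 1) - C ((n : ℚ) + 1) * legendreP n)

/-- The generalized binomial coefficient `a(a-1)⋯(a-k+1)/k!`. -/
def gchoose (a : ℚ) (k : ℕ) : ℚ :=
  (∏ i ∈ Finset.range k, (a - i)) / (Nat.factorial k)

/-!
Put `y = 1/x² - 1`, so that `x² (1 + y) = 1`. The right-hand side is `xⁿ Sₙ(y)` for the polynomial
`Sₙ = ∑ₖ C(n,2k) (-1/2 choose k) Yᵏ`. Dividing the Legendre recurrence by `x^(n+2)` turns it into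
`(n+2) S_{n+2} = (2n+3) S_{n+1} - (n+1)(1+Y) Sₙ`, which holds coefficientwise by Pascal's rule and
`(-1/2 choose k+1) / (-1/2 choose k) = -(2k+1)/(2k+2)`. Hence `xⁿ Sₙ(y)` obeys the recurrence of
`Pₙ(x)` and has the same initial values.
-/

lemma gchoose_zero (a : ℚ) : gchoose a 0 = 1 := by simp [gchoose]

lemma gchoose_succ_mul (a : ℚ) (k : ℕ) :
    gchoose a (k + 1) * (k + 1) = gchoose a k * (a - k) := by
  have hk : (k.factorial : ℚ) ≠ 0 := by positivity
  simp only [gchoose, prod_range_succ, Nat.factorial_succ, Nat.cast_mul, Nat.cast_succ]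
  field_simp

lemma cast_choose_succ_mul (n k : ℕ) :
    (n.choose (k + 1) : ℚ) * (k + 1) = n.choose k * (n - k) := by
  have pascal : ((n + 1).choose (k + 1) : ℚ) = n.choose k + n.choose (k + 1) := by
    exact_mod_cast Nat.choose_succ_succ n k
  have absorb : ((n + 1 : ℕ) : ℚ) * n.choose k = (n + 1).choose (k + 1) * ((k + 1 : ℕ) : ℚ) := by
    exact_mod_cast Nat.add_one_mul_choose_eq n k
  push_cast at absorb
  linear_combination -(k + 1 : ℚ) * pascal - absorb

def legendreCoeff (n k : ℕ) : ℚ := n.choose (2 * k) * gchoose (-1/2) k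

lemma legendreCoeff_zero_right (n : ℕ) : legendreCoeff n 0 = 1 := by
  simp [legendreCoeff, gchoose_zero]

lemma legendreCoeff_eq_zero_of_lt {n k : ℕ} (h : n < 2 * k) : legendreCoeff n k = 0 := by
  simp [legendreCoeff, Nat.choose_eq_zero_of_lt h]

lemma legendreCoeff_add_two (n k : ℕ) :
    (n + 2 : ℚ) * legendreCoeff (n + 2) (k + 1) =
      (2 * n + 3) * legendreCoeff (n + 1) (k + 1)
        - (n + 1) * (legendreCoeff n (k + 1) + legendreCoeff n k) := by
  have pascal₂ : ((n + 2).choose (2 * k + 2) : ℚ) =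
      n.choose (2 * k) + 2 * n.choose (2 * k + 1) + n.choose (2 * k + 2) := by
    norm_cast
    rw [Nat.choose_succ_succ, Nat.choose_succ_succ, Nat.choose_succ_succ n (2 * k + 1)]
    ring
  have pascal₁ : ((n + 1).choose (2 * k + 2) : ℚ) = n.choose (2 * k + 1) + n.choose (2 * k + 2) := by
    exact_mod_cast Nat.choose_succ_succ n (2 * k + 1)
  have hchoose := cast_choose_succ_mul n (2 * k)
  have hg := gchoose_succ_mul (-1/2) k
  have hk : (2 * k + 1 : ℚ) ≠ 0 := by positivity
  refine mul_left_cancel₀ hk ?_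
  push_cast at hchoose
  unfold legendreCoeff
  rw [show 2 * (k + 1) = 2 * k + 2 by ring]
  linear_combination (2 * k + 1) * (n + 2) * gchoose (-1/2) (k + 1) * pascal₂
    - (2 * k + 1) * (2 * n + 3) * gchoose (-1/2) (k + 1) * pascal₁
    + gchoose (-1/2) (k + 1) * hchoose + 2 * (n + 1) * (n.choose (2 * k) : ℚ) * hg

noncomputable def legendreSumPoly (n : ℕ) : ℚ[X] :=
  ∑ k ∈ range (n / 2 + 1), C (legendreCoeff n k) * X ^ k

lemma coeff_legendreSumPoly (n k : ℕ) : (legendreSumPoly n).coeff k = legendreCoeff n k := by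
  simp only [legendreSumPoly, finsetSum_coeff, coeff_C_mul_X_pow, sum_ite_eq, mem_range]
  split_ifs with hk
  · rfl
  · exact (legendreCoeff_eq_zero_of_lt (by omega)).symm

lemma legendreSumPoly_add_two (n : ℕ) :
    C (n + 2 : ℚ) * legendreSumPoly (n + 2) =
      C (2 * n + 3 : ℚ) * legendreSumPoly (n + 1) - C (n + 1 : ℚ) * (1 + X) * legendreSumPoly n := by
  ext (_ | k)
  · simp [coeff_legendreSumPoly, legendreCoeff_zero_right]
    ring
  · simp only [mul_assoc, coeff_C_mul, coeff_sub, add_mul, one_mul, coeff_add, coeff_X_mul,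
      coeff_legendreSumPoly]
    linear_combination legendreCoeff_add_two n k

lemma legendreP_add_two (n : ℕ) :
    C (n + 2 : ℚ) * legendreP (n + 2) =
      C (2 * n + 3 : ℚ) * X * legendreP (n + 1) - C (n + 1 : ℚ) * legendreP n := by
  rw [legendreP, ← mul_assoc, ← C_mul, mul_inv_cancel₀ (by positivity), C_1, one_mul]

lemma eval_legendreP_eq_of_recurrence (x : ℚ) (f : ℕ → ℚ) (h₀ : f 0 = 1) (h₁ : f 1 = x)
    (hrec : ∀ n : ℕ, (n + 2 : ℚ) * f (n + 2) = (2 * n + 3) * x * f (n + 1) - (n + 1) * f n) :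
    ∀ n, (legendreP n).eval x = f n
  | 0 => by simp [legendreP, h₀]
  | 1 => by simp [legendreP, h₁]
  | n + 2 => by
    have hP := congrArg (eval x) (legendreP_add_two n)
    simp only [eval_mul, eval_sub, eval_C, eval_X, eval_legendreP_eq_of_recurrence x f h₀ h₁ hrec n,
      eval_legendreP_eq_of_recurrence x f h₀ h₁ hrec (n + 1)] at hP
    exact mul_left_cancel₀ (by positivity) (hP.trans (hrec n).symm)

theorem legendre_sum_formula (n : ℕ) (x : ℚ) (hx : x ≠ 0) :
    (legendreP n).eval x =
      x ^ n * ∑ k ∈ Finset.range (n / 2 + 1),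
        (n.choose (2 * k) : ℚ) * gchoose (-1/2) k * (1 / x ^ 2 - 1) ^ k := by
  have hy : x ^ 2 * (1 + (1 / x ^ 2 - 1)) = 1 := by field_simp; ring
  generalize 1 / x ^ 2 - 1 = y at hy ⊢
  have hsum (m : ℕ) : ∑ k ∈ range (m / 2 + 1), (m.choose (2 * k) : ℚ) * gchoose (-1/2) k * y ^ k
      = (legendreSumPoly m).eval y := by
    simp [legendreSumPoly, eval_finsetSum, legendreCoeff]
  rw [hsum]
  refine eval_legendreP_eq_of_recurrence x (fun m => x ^ m * (legendreSumPoly m).eval y) ?_ ?_ ?_ n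
  · simp [← hsum, gchoose_zero]
  · simp [← hsum, gchoose_zero]
  · intro m
    have hS := congrArg (eval y) (legendreSumPoly_add_two m)
    simp only [eval_mul, eval_sub, eval_add, eval_C, eval_X, eval_one] at hS
    linear_combination x ^ (m + 2) * hS - (m + 1) * x ^ m * (legendreSumPoly m).eval y * hy
end

section
/- Let p be an odd prime and let a, t be p-integral rational numbers with t \not\equiv 0, 1 (mod p). Then \sum_{k=0}^{p-1} \binom{a}{k}^2 t^k \equiv (t-1)^{\langle a \rangle_p} \sum_{k=0}^{p-1} \binom{a}{k} \binom{-1-a}{k} (1-t)^{-k} (mod p). -/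
/-- A rational number is `p`-integral if `p` does not divide its denominator. -/
def pInt (p : ℕ) (r : ℚ) : Prop := ¬ (p ∣ r.den)

/-- Congruence modulo `p` in the ring of `p`-integral rationals:
`r ≡ s (mod p)` iff `r - s = p·c` for some `p`-integral rational `c`. -/
def pCong (p : ℕ) (r s : ℚ) : Prop := ∃ c : ℚ, pInt p c ∧ r - s = p * c

/-!
Both sides depend on `a` only through finitely many products and sums of `p`-integral numbers,
and `k!` is a `p`-adic unit for `k < p`, so modulo `p` we may replace `a` by `n`. For `a = n` the
congruence is an exact identity: expanding `t^k = ((t - 1) + 1)^k`, the coefficient identity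
`∑ₖ C(n,k)² C(k,j) = C(n,j) C(2n-j,n)` (Vandermonde) turns the left side into
`∑ₖ C(n,k) C(n+k,k) (t-1)^(n-k)`, and `C(-1-n,k) = (-1)^k C(n+k,k)`.
-/

open Finset Polynomial

theorem Nat.sum_range_choose_mul_choose_sub (n m : ℕ) :
    ∑ k ∈ range (n + 1), n.choose k * m.choose (n - k) = (n + m).choose n := by
  rw [Nat.add_choose_eq,
    Nat.sum_antidiagonal_eq_sum_range_succ (fun a b => n.choose a * m.choose b)]

theorem Nat.choose_sq_mul_choose {n k : ℕ} (hk : k ≤ n) (j : ℕ) :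
    n.choose k ^ 2 * k.choose j = n.choose j * (n.choose k * (n - j).choose (n - k)) := by
  rcases le_or_gt j k with hjk | hkj
  · rw [sq, mul_assoc, Nat.choose_mul hjk,
      Nat.choose_symm_of_eq_add (show n - j = (k - j) + (n - k) by omega)]
    ring
  · rcases le_or_gt j n with hjn | hnj
    · rw [Nat.choose_eq_zero_of_lt hkj, Nat.choose_eq_zero_of_lt (by omega : n - j < n - k)]
      simp
    · rw [Nat.choose_eq_zero_of_lt hkj, Nat.choose_eq_zero_of_lt hnj]
      simp

theorem Nat.sum_choose_sq_mul_choose (n j : ℕ) :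
    ∑ k ∈ range (n + 1), n.choose k ^ 2 * k.choose j = n.choose j * (n + (n - j)).choose n := by
  rw [sum_congr rfl fun k hk => Nat.choose_sq_mul_choose (mem_range_succ_iff.mp hk) j,
    ← mul_sum, Nat.sum_range_choose_mul_choose_sub]

theorem add_one_pow_eq_sum_range {R : Type*} [CommSemiring R] (x : R) {k n : ℕ} (hk : k ≤ n) :
    (x + 1) ^ k = ∑ j ∈ range (n + 1), (k.choose j : R) * x ^ j := by
  rw [add_pow, ← sum_subset (range_subset_range.mpr (Nat.succ_le_succ hk))]
  · exact sum_congr rfl fun j _ => by rw [one_pow, mul_one, mul_comm]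
  · intro j _ hj
    rw [Nat.choose_eq_zero_of_lt (by simpa using hj)]
    simp

theorem sum_choose_sq_mul_add_one_pow {R : Type*} [CommSemiring R] (x : R) (n : ℕ) :
    ∑ k ∈ range (n + 1), (n.choose k : R) ^ 2 * (x + 1) ^ k
      = ∑ k ∈ range (n + 1), (n.choose k : R) * (n + k).choose k * x ^ (n - k) := by
  have expand : ∑ k ∈ range (n + 1), (n.choose k : R) ^ 2 * (x + 1) ^ k
      = ∑ j ∈ range (n + 1), (n.choose j : R) * (n + (n - j)).choose n * x ^ j := by
    rw [sum_congr rfl fun k hk => by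
      rw [add_one_pow_eq_sum_range x (mem_range_succ_iff.mp hk), mul_sum], sum_comm]
    refine sum_congr rfl fun j _ => ?_
    simp_rw [← mul_assoc, ← sum_mul]
    exact_mod_cast congrArg (fun m : ℕ => (m : R) * x ^ j) (Nat.sum_choose_sq_mul_choose n j)
  rw [expand, ← sum_range_reflect]
  refine sum_congr rfl fun j hj => ?_
  have hj : j ≤ n := mem_range_succ_iff.mp hj
  rw [add_tsub_cancel_right, Nat.choose_symm hj, Nat.sub_sub_self hj, Nat.choose_symm_add]

theorem gchoose_eq_choose (a : ℚ) (k : ℕ) : gchoose a k = Ring.choose a k := by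
  rw [Ring.choose_eq_smul, ← aeval_eq_smeval, aeval_def, eval₂_eq_eval_map, descPochhammer_map,
    descPochhammer_eval_eq_prod_range, smul_eq_mul, gchoose, div_eq_inv_mul]

theorem gchoose_natCast (n k : ℕ) : gchoose n k = n.choose k := by
  rw [gchoose_eq_choose, Ring.choose_natCast]

theorem gchoose_neg_one_sub_natCast (n k : ℕ) :
    gchoose (-1 - n) k = (-1) ^ k * (n + k).choose k := by
  rw [gchoose_eq_choose, show (-1 - n : ℚ) = -(n + 1 : ℕ) by push_cast; ring, Ring.choose_neg,
    show ((n + 1 : ℕ) : ℚ) + k - 1 = (n + k : ℕ) by push_cast; ring, Ring.choose_natCast,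
    Units.smul_def, zsmul_eq_mul, Int.cast_negOnePow_natCast]

theorem sum_gchoose_natCast_sq_mul_pow {t : ℚ} (ht : t ≠ 1) {n N : ℕ} (hn : n < N) :
    ∑ k ∈ range N, gchoose n k ^ 2 * t ^ k
      = (t - 1) ^ n * ∑ k ∈ range N, gchoose n k * gchoose (-1 - n) k * (1 / (1 - t)) ^ k := by
  have hsub : range (n + 1) ⊆ range N := range_subset_range.mpr hn
  rw [← sum_subset hsub (fun k _ hk => ?_), ← sum_subset hsub (fun k _ hk => ?_)]
  · have key := sum_choose_sq_mul_add_one_pow (t - 1) n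
    rw [sub_add_cancel] at key
    simp only [gchoose_natCast, gchoose_neg_one_sub_natCast]
    rw [key, mul_sum]
    refine sum_congr rfl fun k hk => ?_
    have hsign : (-1 : ℚ) ^ k * (1 / (1 - t)) ^ k = ((t - 1) ^ k)⁻¹ := by
      rw [← mul_pow, ← inv_pow, ← neg_sub t 1, div_neg, neg_one_mul, neg_neg, one_div]
    rw [pow_sub₀ _ (sub_ne_zero.mpr ht) (mem_range_succ_iff.mp hk), ← hsign]
    ring
  all_goals rw [gchoose_natCast, Nat.choose_eq_zero_of_lt (by simpa using hk)]; simp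

def pIntSubring (p : ℕ) [hp : Fact p.Prime] : Subring ℚ where
  carrier := {r | pInt p r}
  zero_mem' := by simpa [pInt] using hp.out.ne_one
  one_mem' := by simpa [pInt] using hp.out.ne_one
  add_mem' {q r} hq hr h := ((hp.out.dvd_mul).mp (h.trans (Rat.add_den_dvd q r))).elim hq hr
  mul_mem' {q r} hq hr h := ((hp.out.dvd_mul).mp (h.trans (Rat.mul_den_dvd q r))).elim hq hr
  neg_mem' {r} hr := by simpa [pInt] using hr

section Congruence

variable {p : ℕ} [Fact p.Prime]

local notation "𝒪" => pIntSubring p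

theorem mem_pIntSubring {r : ℚ} : r ∈ 𝒪 ↔ pInt p r := Iff.rfl

theorem inv_intCast_mem_pIntSubring {m : ℤ} (hm : ¬ (p : ℤ) ∣ m) : (m : ℚ)⁻¹ ∈ 𝒪 := by
  rw [mem_pIntSubring, pInt, Rat.inv_intCast_den]
  split_ifs
  · simpa using (Fact.out : p.Prime).ne_one
  · rwa [← Int.natCast_dvd]

theorem inv_natCast_mem_pIntSubring {m : ℕ} (hm : ¬ p ∣ m) : (m : ℚ)⁻¹ ∈ 𝒪 := by
  exact_mod_cast inv_intCast_mem_pIntSubring (p := p) (m := m) (by exact_mod_cast hm)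

namespace pCong

variable {r s r' s' : ℚ}

theorem refl (r : ℚ) : pCong p r r := ⟨0, zero_mem 𝒪, by simp⟩

theorem add (h : pCong p r s) (h' : pCong p r' s') : pCong p (r + r') (s + s') := by
  obtain ⟨c, hc, e⟩ := h
  obtain ⟨c', hc', e'⟩ := h'
  exact ⟨c + c', (add_mem hc hc' : c + c' ∈ 𝒪), by linear_combination e + e'⟩

theorem sub (h : pCong p r s) (h' : pCong p r' s') : pCong p (r - r') (s - s') := by
  obtain ⟨c, hc, e⟩ := h
  obtain ⟨c', hc', e'⟩ := h'
  exact ⟨c - c', (sub_mem hc hc' : c - c' ∈ 𝒪), by linear_combination e - e'⟩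

theorem mul_left (hr : r ∈ 𝒪) (h : pCong p s s') : pCong p (r * s) (r * s') := by
  obtain ⟨c, hc, e⟩ := h
  exact ⟨r * c, mul_mem hr hc, by linear_combination r * e⟩

theorem mul_right (hr : r ∈ 𝒪) (h : pCong p s s') : pCong p (s * r) (s' * r) := by
  simpa only [mul_comm _ r] using mul_left hr h

theorem symm (h : pCong p r s) : pCong p s r := by
  obtain ⟨c, hc, e⟩ := h
  exact ⟨-c, (neg_mem hc : -c ∈ 𝒪), by linear_combination -e⟩

theorem trans {u : ℚ} (h : pCong p r s) (h' : pCong p s u) : pCong p r u := by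
  obtain ⟨c, hc, e⟩ := h
  obtain ⟨c', hc', e'⟩ := h'
  exact ⟨c + c', (add_mem hc hc' : c + c' ∈ 𝒪), by linear_combination e + e'⟩

theorem mul (hr : r ∈ 𝒪) (hs' : s' ∈ 𝒪) (h : pCong p r s) (h' : pCong p r' s') :
    pCong p (r * r') (s * s') :=
  (mul_left hr h').trans (mul_right hs' h)

theorem sum {ι : Type*} {t : Finset ι} {f g : ι → ℚ} (h : ∀ i ∈ t, pCong p (f i) (g i)) :
    pCong p (∑ i ∈ t, f i) (∑ i ∈ t, g i) := by
  classical
  induction t using Finset.induction_on with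
  | empty => exact refl 0
  | insert i t hi ih =>
    rw [sum_insert hi, sum_insert hi]
    exact (h i (mem_insert_self i t)).add (ih fun j hj => h j (mem_insert_of_mem hj))

theorem prod {ι : Type*} {t : Finset ι} {f g : ι → ℚ} (hf : ∀ i ∈ t, f i ∈ 𝒪)
    (hg : ∀ i ∈ t, g i ∈ 𝒪) (h : ∀ i ∈ t, pCong p (f i) (g i)) :
    pCong p (∏ i ∈ t, f i) (∏ i ∈ t, g i) := by
  classical
  induction t using Finset.induction_on with
  | empty => exact refl 1
  | insert i t hi ih =>
    rw [prod_insert hi, prod_insert hi]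
    exact (h i (mem_insert_self i t)).mul (hf i (mem_insert_self i t))
      (prod_mem fun j hj => hg j (mem_insert_of_mem hj))
      (ih (fun j hj => hf j (mem_insert_of_mem hj)) (fun j hj => hg j (mem_insert_of_mem hj))
        fun j hj => h j (mem_insert_of_mem hj))

theorem pow (hr : r ∈ 𝒪) (hs : s ∈ 𝒪) (h : pCong p r s) (k : ℕ) : pCong p (r ^ k) (s ^ k) := by
  simpa using prod (t := range k) (fun _ _ => hr) (fun _ _ => hs) fun _ _ => h

end pCong

theorem pCong_zero_of_dvd_num {r : ℚ} (hr : r ∈ 𝒪) (h : (p : ℤ) ∣ r.num) : pCong p r 0 := by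
  obtain ⟨m, hm⟩ := h
  refine ⟨m * (r.den : ℚ)⁻¹, mul_mem (intCast_mem 𝒪 m) (inv_natCast_mem_pIntSubring hr), ?_⟩
  rw [sub_zero, ← mul_assoc, ← div_eq_mul_inv]
  exact_mod_cast (hm ▸ Rat.num_div_den r).symm

theorem inv_mem_pIntSubring {r : ℚ} (hr : r ∈ 𝒪) (h : ¬ pCong p r 0) : r⁻¹ ∈ 𝒪 := by
  rw [← Rat.num_div_den r, inv_div, div_eq_mul_inv]
  exact mul_mem (natCast_mem 𝒪 _)
    (inv_intCast_mem_pIntSubring fun hnum => h (pCong_zero_of_dvd_num hr hnum))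

theorem inv_factorial_mem_pIntSubring {k : ℕ} (hk : k < p) : ((k.factorial : ℕ) : ℚ)⁻¹ ∈ 𝒪 :=
  inv_natCast_mem_pIntSubring fun h => hk.not_ge ((Fact.out : p.Prime).dvd_factorial.mp h)

theorem gchoose_mem_pIntSubring {x : ℚ} (hx : x ∈ 𝒪) {k : ℕ} (hk : k < p) : gchoose x k ∈ 𝒪 :=
  mul_mem (prod_mem fun i _ => sub_mem hx (natCast_mem 𝒪 i)) (inv_factorial_mem_pIntSubring hk)

theorem pCong.gchoose {x y : ℚ} (hx : x ∈ 𝒪) (hy : y ∈ 𝒪) (h : pCong p x y) {k : ℕ}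
    (hk : k < p) : pCong p (gchoose x k) (gchoose y k) :=
  pCong.mul_right (inv_factorial_mem_pIntSubring hk)
    (pCong.prod (fun i _ => sub_mem hx (natCast_mem 𝒪 i)) (fun i _ => sub_mem hy (natCast_mem 𝒪 i))
      fun i _ => h.sub (pCong.refl i))

end Congruence

theorem sum_gchoose_mul_congr_general (p : ℕ) (hp : p.Prime)
    (a t : ℚ) (ha : pInt p a) (ht : pInt p t)
    (ht1 : ¬ pCong p t 1)
    (n : ℕ) (hn : n < p) (han : pCong p a n) :
    pCong p (∑ k ∈ Finset.range p, gchoose a k ^ 2 * t ^ k)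
      ((t - 1) ^ n *
        ∑ k ∈ Finset.range p, gchoose a k * gchoose (-1 - a) k * (1 / (1 - t)) ^ k) := by
  have : Fact p.Prime := ⟨hp⟩
  have hn' : (n : ℚ) ∈ pIntSubring p := natCast_mem _ n
  have hna : -1 - a ∈ pIntSubring p := sub_mem (neg_mem (one_mem _)) ha
  have hnn : -1 - (n : ℚ) ∈ pIntSubring p := sub_mem (neg_mem (one_mem _)) hn'
  have hinv : 1 / (1 - t) ∈ pIntSubring p := by
    refine one_div (1 - t) ▸ inv_mem_pIntSubring (sub_mem (one_mem _) ht) fun ⟨c, hc, e⟩ => ?_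
    exact ht1 ⟨-c, (neg_mem hc : -c ∈ pIntSubring p), by linear_combination -e⟩
  have lhs : pCong p (∑ k ∈ range p, gchoose a k ^ 2 * t ^ k)
      (∑ k ∈ range p, gchoose n k ^ 2 * t ^ k) := by
    refine pCong.sum fun k hk => pCong.mul_right (pow_mem ht k) ?_
    replace hk := mem_range.mp hk
    exact (han.gchoose ha hn' hk).pow (gchoose_mem_pIntSubring ha hk)
      (gchoose_mem_pIntSubring hn' hk) 2
  have rhs : pCong p
      ((t - 1) ^ n * ∑ k ∈ range p, gchoose a k * gchoose (-1 - a) k * (1 / (1 - t)) ^ k)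
      ((t - 1) ^ n * ∑ k ∈ range p, gchoose n k * gchoose (-1 - n) k * (1 / (1 - t)) ^ k) := by
    refine pCong.mul_left (pow_mem (sub_mem ht (one_mem _)) n)
      (pCong.sum fun k hk => pCong.mul_right (pow_mem hinv k) ?_)
    replace hk := mem_range.mp hk
    exact (han.gchoose ha hn' hk).mul (gchoose_mem_pIntSubring ha hk)
      (gchoose_mem_pIntSubring hnn hk) (((pCong.refl (-1)).sub han).gchoose hna hnn hk)
  rw [sum_gchoose_natCast_sq_mul_pow (fun h => ht1 (h ▸ pCong.refl t)) hn] at lhs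
  exact lhs.trans rhs.symm

theorem sum_gchoose_mul_congr (p : ℕ) (hp : p.Prime) (hodd : Odd p)
    (a t : ℚ) (ha : pInt p a) (ht : pInt p t)
    (ht0 : ¬ pCong p t 0) (ht1 : ¬ pCong p t 1)
    (n : ℕ) (hn : n < p) (han : pCong p a n) :
    pCong p (∑ k ∈ Finset.range p, gchoose a k ^ 2 * t ^ k)
      ((t - 1) ^ n *
        ∑ k ∈ Finset.range p, gchoose a k * gchoose (-1 - a) k * (1 / (1 - t)) ^ k) :=
  sum_gchoose_mul_congr_general p hp a t ha ht ht1 n hn han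
end

section
/- Let p > 3 be a prime and t a p-integral rational with t \not\equiv 0 (mod p). Let n = \langle -1/12 \rangle_p be the residue of -1/12 modulo p. Then \sum_{k=0}^{p-1} \binom{-1/12}{k} \binom{-5/12}{k} (1-t)^k \equiv t^n \sum_{k=0}^{p-1} \binom{-1/12}{k} \binom{-7/12}{k} (1 - 1/t)^k (mod p). -/
/-!
Reduction mod `p` is the cast `ℚ → ZMod p` on `p`-integral rationals. For `k < p` the residue
of `C(a, k)` depends only on that of `a`, so with `-1/12 ≡ n` and `-5/12 ≡ m` the coefficients
become `C(n, k)`, `C(m, k)` and, since `-7/12 = -1 - (-5/12)`, `C(-m-1, k) = (-1)^k C(m+k, k)`.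
Putting `x = 1 - t`, the congruence is then the terminating Pfaff transformation
`∑ C(n,k) C(m,k) x^k = ∑ C(n,k) C(m+k,k) x^k (1-x)^(n-k)`, which follows from Vandermonde's
identity `C(m+k,k) = ∑ C(m,i) C(k,i)` and the binomial theorem.
-/

open Finset

theorem add_choose_eq_sum_choose_mul_choose (m k : ℕ) {N : ℕ} (hk : k < N) :
    (m + k).choose k = ∑ i ∈ range N, m.choose i * k.choose i := by
  rw [Nat.add_choose_eq, Nat.sum_antidiagonal_eq_sum_range_succ_mk]
  refine (sum_congr rfl fun i hi => ?_).trans <|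
    sum_subset (range_subset_range.2 hk) fun i _ hi => ?_
  · rw [Nat.choose_symm (Nat.lt_succ_iff.1 (mem_range.1 hi))]
  · rw [Nat.choose_eq_zero_of_lt (by simpa [Nat.lt_succ_iff] using hi : k < i), mul_zero]

theorem sum_choose_mul_choose_mul_pow_mul_pow {R : Type*} [CommSemiring R] (x y : R)
    {n i : ℕ} (hi : i ≤ n) :
    ∑ k ∈ range (n + 1), (n.choose k * k.choose i : R) * x ^ k * y ^ (n - k)
      = n.choose i * x ^ i * (x + y) ^ (n - i) := by
  rw [show n + 1 = i + (n - i + 1) by omega, sum_range_add, add_pow, mul_sum,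
    sum_eq_zero fun k hk => by rw [Nat.choose_eq_zero_of_lt (mem_range.1 hk)]; simp, zero_add]
  refine sum_congr rfl fun j hj => ?_
  have hchoose := Nat.choose_mul (n := n) (Nat.le_add_right i j)
  rw [Nat.add_sub_cancel_left] at hchoose
  rw [← Nat.cast_mul, hchoose, Nat.sub_add_eq, pow_add]
  push_cast
  ring

/-- The terminating Pfaff transformation. -/
theorem sum_choose_mul_choose_mul_pow {R : Type*} [CommRing R] (x : R) (n m : ℕ) :
    ∑ k ∈ range (n + 1), (n.choose k * m.choose k : R) * x ^ k
      = ∑ k ∈ range (n + 1),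
          (n.choose k * (m + k).choose k : R) * x ^ k * (1 - x) ^ (n - k) := by
  symm
  calc _ = ∑ k ∈ range (n + 1), ∑ i ∈ range (n + 1),
          (m.choose i : R) * ((n.choose k * k.choose i : R) * x ^ k * (1 - x) ^ (n - k)) := by
        refine sum_congr rfl fun k hk => ?_
        rw [add_choose_eq_sum_choose_mul_choose m k (mem_range.1 hk), Nat.cast_sum, mul_sum,
          sum_mul, sum_mul]
        refine sum_congr rfl fun i _ => ?_
        push_cast
        ring
    _ = ∑ i ∈ range (n + 1),
          (m.choose i : R) * (n.choose i * x ^ i * (x + (1 - x)) ^ (n - i)) := by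
        rw [sum_comm]
        refine sum_congr rfl fun i hi => ?_
        rw [← mul_sum,
          sum_choose_mul_choose_mul_pow_mul_pow _ _ (Nat.lt_succ_iff.1 (mem_range.1 hi))]
    _ = _ := by
        refine sum_congr rfl fun i _ => ?_
        rw [add_sub_cancel, one_pow]
        ring

theorem sum_choose_mul_choose_mul_one_sub_pow {K : Type*} [Field K] {τ : K} (hτ : τ ≠ 0)
    {n N : ℕ} (hN : n < N) (m : ℕ) :
    ∑ k ∈ range N, (n.choose k : K) * m.choose k * (1 - τ) ^ k
      = τ ^ n * ∑ k ∈ range N,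
          (n.choose k : K) * ((-1) ^ k * (m + k).choose k) * (1 - 1 / τ) ^ k := by
  have htrunc (f : ℕ → K) : ∑ k ∈ range N, (n.choose k : K) * f k
      = ∑ k ∈ range (n + 1), (n.choose k : K) * f k := by
    refine (sum_subset (range_subset_range.2 hN) fun k _ hk => ?_).symm
    rw [Nat.choose_eq_zero_of_lt (by simpa [Nat.lt_succ_iff] using hk), Nat.cast_zero, zero_mul]
  simp only [mul_assoc, htrunc]
  have hpfaff := sum_choose_mul_choose_mul_pow (1 - τ) n m
  simp only [sub_sub_cancel, mul_assoc] at hpfaff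
  rw [hpfaff, mul_sum]
  refine sum_congr rfl fun k hk => ?_
  have hτk : τ ^ n = τ ^ (n - k) * τ ^ k := by
    rw [← pow_add, Nat.sub_add_cancel (Nat.lt_succ_iff.1 (mem_range.1 hk))]
  have hpow : (1 - τ) ^ k = (-1) ^ k * (1 - 1 / τ) ^ k * τ ^ k := by
    rw [← mul_pow, ← mul_pow]
    congr 1
    field_simp
    ring
  rw [hτk, hpow]
  ring

theorem gchoose_natCast_s19 (N k : ℕ) : gchoose N k = N.choose k := by
  rw [gchoose, ← descPochhammer_eval_eq_prod_range, Nat.cast_choose_eq_descPochhammer_div]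

theorem gchoose_neg_natCast_sub_one (M k : ℕ) :
    gchoose (-M - 1) k = (-1) ^ k * (M + k).choose k := by
  rw [gchoose, div_eq_iff (by exact_mod_cast k.factorial_ne_zero)]
  have hasc : ∏ i ∈ range k, ((M + 1 + i : ℕ) : ℚ) = k.factorial * (M + k).choose k := by
    rw [← Nat.cast_prod, ← Nat.ascFactorial_eq_prod_range,
      Nat.ascFactorial_eq_factorial_mul_choose, Nat.cast_mul]
  calc ∏ i ∈ range k, (-M - 1 - i : ℚ)
      = ∏ i ∈ range k, (-1) * ((M + 1 + i : ℕ) : ℚ) :=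
        prod_congr rfl fun i _ => by push_cast; ring
    _ = _ := by rw [prod_mul_distrib, prod_const, card_range, hasc]; ring

abbrev pIntegers (p : ℕ) [Fact p.Prime] : Subring ℚ := (Rat.padicValuation p).integer

section
variable {p : ℕ} [Fact p.Prime]

/- The cast `(r : ZMod p) = r.num / r.den` is `0` on every rational outside `pIntegers p`,
so it is additive and multiplicative only there. -/

theorem pInt_iff_mem_pIntegers {r : ℚ} : pInt p r ↔ r ∈ pIntegers p :=
  Rat.padicValuation_le_one_iff.symm

theorem cast_den_ne_zero {r : ℚ} (hr : r ∈ pIntegers p) : (r.den : ZMod p) ≠ 0 := by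
  rwa [Ne, ZMod.natCast_eq_zero_iff, ← pInt, pInt_iff_mem_pIntegers]

theorem cast_num_ne_zero {r : ℚ} (h : (r : ZMod p) ≠ 0) : (r.num : ZMod p) ≠ 0 := by
  contrapose! h
  rw [Rat.cast_def, h, zero_div]

theorem inv_mem_pIntegers {r : ℚ} (h : (r : ZMod p) ≠ 0) : r⁻¹ ∈ pIntegers p := by
  have hr : r ≠ 0 := by rintro rfl; exact h Rat.cast_zero
  rw [← pInt_iff_mem_pIntegers, pInt, Rat.den_inv_of_ne_zero hr, ← Int.natCast_dvd,
    ← ZMod.intCast_zmod_eq_zero_iff_dvd]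
  exact cast_num_ne_zero h

theorem cast_sub_of_mem {r s : ℚ} (hr : r ∈ pIntegers p) (hs : s ∈ pIntegers p) :
    ((r - s : ℚ) : ZMod p) = r - s :=
  Rat.cast_sub_of_ne_zero (cast_den_ne_zero hr) (cast_den_ne_zero hs)

theorem cast_mul_of_mem {r s : ℚ} (hr : r ∈ pIntegers p) (hs : s ∈ pIntegers p) :
    ((r * s : ℚ) : ZMod p) = r * s :=
  Rat.cast_mul_of_ne_zero (cast_den_ne_zero hr) (cast_den_ne_zero hs)

theorem cast_sum_of_mem {ι : Type*} {s : Finset ι} {f : ι → ℚ}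
    (hf : ∀ i ∈ s, f i ∈ pIntegers p) :
    ((∑ i ∈ s, f i : ℚ) : ZMod p) = ∑ i ∈ s, (f i : ZMod p) := by
  induction s using Finset.cons_induction with
  | empty => simp
  | cons i s hi ih =>
    rw [forall_mem_cons] at hf
    rw [sum_cons, sum_cons, Rat.cast_add_of_ne_zero (cast_den_ne_zero hf.1)
      (cast_den_ne_zero (sum_mem hf.2)), ih hf.2]

theorem cast_prod_of_mem {ι : Type*} {s : Finset ι} {f : ι → ℚ}
    (hf : ∀ i ∈ s, f i ∈ pIntegers p) :
    ((∏ i ∈ s, f i : ℚ) : ZMod p) = ∏ i ∈ s, (f i : ZMod p) := by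
  induction s using Finset.cons_induction with
  | empty => simp
  | cons i s hi ih =>
    rw [forall_mem_cons] at hf
    rw [prod_cons, prod_cons, cast_mul_of_mem hf.1 (prod_mem hf.2), ih hf.2]

theorem pCong_iff_cast_eq {r s : ℚ} (hr : r ∈ pIntegers p) (hs : s ∈ pIntegers p) :
    pCong p r s ↔ (r : ZMod p) = s := by
  rw [← sub_eq_zero, ← cast_sub_of_mem hr hs]
  constructor
  · rintro ⟨c, hc, hrs⟩
    rw [hrs, cast_mul_of_mem (natCast_mem _ p) (pInt_iff_mem_pIntegers.1 hc), Rat.cast_natCast,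
      ZMod.natCast_self, zero_mul]
  · intro hd
    obtain ⟨e, he⟩ : (p : ℤ) ∣ (r - s).num := by
      rw [← ZMod.intCast_zmod_eq_zero_iff_dvd]
      rw [Rat.cast_def, div_eq_zero_iff] at hd
      exact hd.resolve_right (cast_den_ne_zero (sub_mem hr hs))
    refine ⟨e * ((r - s).den : ℚ)⁻¹, pInt_iff_mem_pIntegers.2 <| mul_mem (intCast_mem _ e)
      (inv_mem_pIntegers (by rw [Rat.cast_natCast]; exact cast_den_ne_zero (sub_mem hr hs))), ?_⟩
    conv_lhs => rw [← Rat.num_div_den (r - s), he]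
    push_cast
    ring

theorem cast_factorial_ne_zero {k : ℕ} (hk : k < p) : (k.factorial : ZMod p) ≠ 0 := by
  rw [Ne, ZMod.natCast_eq_zero_iff, (Fact.out : p.Prime).dvd_factorial]
  omega

theorem gchoose_mem_pIntegers {a : ℚ} (ha : a ∈ pIntegers p) {k : ℕ} (hk : k < p) :
    gchoose a k ∈ pIntegers p := by
  rw [gchoose, div_eq_mul_inv]
  exact mul_mem (prod_mem fun i _ => sub_mem ha (natCast_mem _ i))
    (inv_mem_pIntegers (by rw [Rat.cast_natCast]; exact cast_factorial_ne_zero hk))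

theorem cast_gchoose {a : ℚ} (ha : a ∈ pIntegers p) {k : ℕ} (hk : k < p) :
    (gchoose a k : ZMod p) = (∏ i ∈ range k, ((a : ZMod p) - i)) / k.factorial := by
  have hmem : ∀ i ∈ range k, a - i ∈ pIntegers p := fun i _ => sub_mem ha (natCast_mem _ i)
  rw [gchoose, Rat.cast_div_of_ne_zero (cast_den_ne_zero (prod_mem hmem))
    (by simpa using cast_factorial_ne_zero hk), cast_prod_of_mem hmem, Rat.cast_natCast]
  congr 1
  refine prod_congr rfl fun i _ => ?_
  rw [cast_sub_of_mem ha (natCast_mem _ i), Rat.cast_natCast]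

theorem cast_gchoose_congr {a b : ℚ} (ha : a ∈ pIntegers p) (hb : b ∈ pIntegers p) {k : ℕ}
    (hk : k < p) (h : (a : ZMod p) = b) : (gchoose a k : ZMod p) = gchoose b k := by
  rw [cast_gchoose ha hk, cast_gchoose hb hk, h]

theorem cast_gchoose_of_cast_eq_natCast {a : ℚ} (ha : a ∈ pIntegers p) {k : ℕ} (hk : k < p)
    {N : ℕ} (h : (a : ZMod p) = N) : (gchoose a k : ZMod p) = N.choose k := by
  rw [cast_gchoose_congr ha (natCast_mem _ N) hk (by rw [h, Rat.cast_natCast]), gchoose_natCast_s19,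
    Rat.cast_natCast]

theorem cast_gchoose_of_cast_eq_neg_natCast_sub_one {a : ℚ} (ha : a ∈ pIntegers p) {k : ℕ}
    (hk : k < p) {M : ℕ} (h : (a : ZMod p) = -M - 1) :
    (gchoose a k : ZMod p) = (-1) ^ k * (M + k).choose k := by
  have hM : -(M : ℚ) - 1 ∈ pIntegers p := sub_mem (neg_mem (natCast_mem _ M)) (one_mem _)
  rw [cast_gchoose_congr ha hM hk (by rw [h, cast_sub_of_mem (neg_mem (natCast_mem _ M))
      (one_mem _), Rat.cast_neg, Rat.cast_natCast, Rat.cast_one]),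
    gchoose_neg_natCast_sub_one, cast_mul_of_mem (pow_mem (neg_mem (one_mem _)) k)
      (natCast_mem _ _), Rat.cast_pow, Rat.cast_neg, Rat.cast_one, Rat.cast_natCast]

theorem sum_gchoose_mul_gchoose_mul_pow_mem {a b x : ℚ} (ha : a ∈ pIntegers p)
    (hb : b ∈ pIntegers p) (hx : x ∈ pIntegers p) :
    ∑ k ∈ range p, gchoose a k * gchoose b k * x ^ k ∈ pIntegers p :=
  sum_mem fun k hk => mul_mem (mul_mem (gchoose_mem_pIntegers ha (mem_range.1 hk))
    (gchoose_mem_pIntegers hb (mem_range.1 hk))) (pow_mem hx k)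

theorem cast_sum_gchoose_mul_gchoose_mul_pow {a b x : ℚ} (ha : a ∈ pIntegers p)
    (hb : b ∈ pIntegers p) (hx : x ∈ pIntegers p) :
    ((∑ k ∈ range p, gchoose a k * gchoose b k * x ^ k : ℚ) : ZMod p)
      = ∑ k ∈ range p, (gchoose a k : ZMod p) * gchoose b k * (x : ZMod p) ^ k := by
  have hmem {c : ℚ} (hc : c ∈ pIntegers p) {k : ℕ} (hk : k ∈ range p) :
      gchoose c k ∈ pIntegers p :=
    gchoose_mem_pIntegers hc (mem_range.1 hk)
  rw [cast_sum_of_mem fun k hk => mul_mem (mul_mem (hmem ha hk) (hmem hb hk)) (pow_mem hx k)]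
  refine sum_congr rfl fun k hk => ?_
  rw [cast_mul_of_mem (mul_mem (hmem ha hk) (hmem hb hk)) (pow_mem hx k),
    cast_mul_of_mem (hmem ha hk) (hmem hb hk), Rat.cast_pow]

theorem pCong_sum_gchoose_mul_gchoose_mul_pow {a b t : ℚ} (ha : a ∈ pIntegers p)
    (hb : b ∈ pIntegers p) (ht : t ∈ pIntegers p) (ht0 : (t : ZMod p) ≠ 0) {n : ℕ}
    (hn : n < p) (han : (a : ZMod p) = n) :
    pCong p (∑ k ∈ range p, gchoose a k * gchoose b k * (1 - t) ^ k)
      (t ^ n * ∑ k ∈ range p, gchoose a k * gchoose (-b - 1) k * (1 - 1 / t) ^ k) := by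
  obtain ⟨m, hbm⟩ : ∃ m : ℕ, (b : ZMod p) = m := ⟨_, (ZMod.natCast_zmod_val _).symm⟩
  have hb' : -b - 1 ∈ pIntegers p := sub_mem (neg_mem hb) (one_mem _)
  have hbm' : ((-b - 1 : ℚ) : ZMod p) = -m - 1 := by
    rw [cast_sub_of_mem (neg_mem hb) (one_mem _), Rat.cast_neg, hbm, Rat.cast_one]
  have ht' : 1 / t ∈ pIntegers p := by rw [one_div]; exact inv_mem_pIntegers ht0
  have h1t : 1 - t ∈ pIntegers p := sub_mem (one_mem _) ht
  have h1t' : 1 - 1 / t ∈ pIntegers p := sub_mem (one_mem _) ht'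
  have hR := sum_gchoose_mul_gchoose_mul_pow_mem ha hb' h1t'
  rw [pCong_iff_cast_eq (sum_gchoose_mul_gchoose_mul_pow_mem ha hb h1t)
      (mul_mem (pow_mem ht n) hR), cast_mul_of_mem (pow_mem ht n) hR,
    cast_sum_gchoose_mul_gchoose_mul_pow ha hb h1t,
    cast_sum_gchoose_mul_gchoose_mul_pow ha hb' h1t',
    Rat.cast_pow, cast_sub_of_mem (one_mem _) ht, cast_sub_of_mem (one_mem _) ht', one_div,
    Rat.cast_inv_of_ne_zero (cast_num_ne_zero ht0), Rat.cast_one, ← one_div]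
  convert sum_choose_mul_choose_mul_one_sub_pow ht0 hn m using 1
  · refine sum_congr rfl fun k hk => ?_
    rw [cast_gchoose_of_cast_eq_natCast ha (mem_range.1 hk) han,
      cast_gchoose_of_cast_eq_natCast hb (mem_range.1 hk) hbm]
  · refine congrArg _ (sum_congr rfl fun k hk => ?_)
    rw [cast_gchoose_of_cast_eq_natCast ha (mem_range.1 hk) han,
      cast_gchoose_of_cast_eq_neg_natCast_sub_one hb' (mem_range.1 hk) hbm']

theorem inv_twelve_mem_pIntegers (hp3 : 3 < p) : (12 : ℚ)⁻¹ ∈ pIntegers p := by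
  refine inv_mem_pIntegers ?_
  rw [show (12 : ℚ) = (12 : ℕ) by norm_num, Rat.cast_natCast, Ne, ZMod.natCast_eq_zero_iff]
  intro h
  have hp : p.Prime := Fact.out
  have := Nat.le_of_dvd (by norm_num) h
  interval_cases p <;> revert hp h <;> decide

end

theorem sum_twelfth_congr (p : ℕ) (hp : p.Prime) (hp3 : 3 < p)
    (t : ℚ) (ht : pInt p t) (ht0 : ¬ pCong p t 0)
    (n : ℕ) (hn : n < p) (han : pCong p (-1/12) n) :
    pCong p
      (∑ k ∈ Finset.range p, gchoose (-1/12) k * gchoose (-5/12) k * (1 - t) ^ k)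
      (t ^ n *
        ∑ k ∈ Finset.range p, gchoose (-1/12) k * gchoose (-7/12) k * (1 - 1/t) ^ k) := by
  have := Fact.mk hp
  have htwelfths (c : ℤ) : (c / 12 : ℚ) ∈ pIntegers p :=
    mul_mem (intCast_mem _ c) (inv_twelve_mem_pIntegers hp3)
  have ha : (-1 / 12 : ℚ) ∈ pIntegers p := by simpa using htwelfths (-1)
  have hb : (-5 / 12 : ℚ) ∈ pIntegers p := by simpa using htwelfths (-5)
  rw [pInt_iff_mem_pIntegers] at ht
  rw [pCong_iff_cast_eq ht (zero_mem _), Rat.cast_zero] at ht0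
  rw [pCong_iff_cast_eq ha (natCast_mem _ n), Rat.cast_natCast] at han
  rw [show (-7 / 12 : ℚ) = -(-5 / 12) - 1 by norm_num]
  exact pCong_sum_gchoose_mul_gchoose_mul_pow ha hb ht ht0 hn han
end
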